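/- arXiv:2005.03287 — 2 statements merged into one kernel-verified Lean document; each statement's English description precedes it below -/
import Mathlib

section
/- A matrix M ∈ ℝ^{n×n} is a P-matrix if and only if the matrix M(I - D) + D is nonsingular for every diagonal matrix D = diag(d_i) with 0 ≤ d_i ≤ 1. -/
open Matrix

/-- A square real matrix is a `P`-matrix if all of its principal minors are positive. -/
def IsPMatrix {n : ℕ} (M : Matrix (Fin n) (Fin n) ℝ) : Prop :=
  ∀ s : Finset (Fin n), s.Nonempty →
    0 < (M.submatrix (fun i : s => (i : Fin n)) (fun i : s => (i : Fin n))).det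

/-- The (unordered) singular values of a real square matrix: square roots of the
eigenvalues of `Aᵀ * A`. -/
noncomputable def singVals {n : ℕ} (A : Matrix (Fin n) (Fin n) ℝ) : Fin n → ℝ :=
  fun i => Real.sqrt ((show (Aᵀ * A).IsHermitian by
    simpa [Matrix.conjTranspose_eq_transpose_of_trivial] using
      Matrix.isHermitian_conjTranspose_mul_self A).eigenvalues i)

/-- `svalsDecr A i` is the `i`-th largest singular value of `A` (so `svalsDecr A 0 = σ₁`). -/
noncomputable def svalsDecr {n : ℕ} (A : Matrix (Fin n) (Fin n) ℝ) : Fin n → ℝ :=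
  fun i => singVals A (Tuple.sort (singVals A) (Fin.rev i))

/-- The maximal singular value `σ₁`. -/
noncomputable def maxSV {n : ℕ} (A : Matrix (Fin n) (Fin n) ℝ) : ℝ :=
  ⨆ i, singVals A i

/-- The minimal singular value `σₙ`. -/
noncomputable def minSV {n : ℕ} (A : Matrix (Fin n) (Fin n) ℝ) : ℝ :=
  ⨅ i, singVals A i

/-- The spectral radius of a real square matrix (as the spectral radius of its
complexification), valued in `ℝ≥0∞`. -/
noncomputable def specRad {n : ℕ} (A : Matrix (Fin n) (Fin n) ℝ) : ENNReal :=
  spectralRadius ℂ (A.map (Complex.ofReal))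

/-!
Expanding `det (M (I - D) + D)` multilinearly in the columns gives
`∑ₛ (∏_{i ∈ s} (1 - dᵢ)) (∏_{i ∉ s} dᵢ) det M[s]`: for a P-matrix every term is nonnegative and
the one with `s = {i | dᵢ < 1}` is positive. Conversely, letting `dᵢ = t` on `s` and `dᵢ = 1`
off `s` joins the identity (`t = 1`) to a matrix with determinant `det M[s]` (`t = 0`) through
nonsingular matrices, so `det M[s] > 0` by the intermediate value theorem.
-/

open Finset

namespace Matrix

variable {ι R : Type*} [Fintype ι] [DecidableEq ι]

section CommRing

variable [CommRing R]

theorem det_diagonal_mul_add_diagonal (N : Matrix ι ι R) (a b : ι → R) :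
    (diagonal a * N + diagonal b).det =
      ∑ s : Finset ι, (∏ i ∈ s, a i) * (∏ i ∈ sᶜ, b i) *
        (N.submatrix (↑) (↑) : Matrix s s R).det := by
  let D : (ι → R) [⋀^ι]→ₗ[R] R := detRowAlternating
  have hrows : diagonal a * N + diagonal b =
      (fun i => a i • N.row i) + fun i => b i • (1 : Matrix ι ι R).row i := by
    ext i j
    simp [diagonal_apply, one_apply, Matrix.row]
  change D _ = _
  rw [hrows, D.map_add_univ]
  refine sum_congr rfl fun s _ => ?_
  have hsmul : (s.piecewise (fun i => a i • N.row i) fun i => b i • (1 : Matrix ι ι R).row i) =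
      fun i => s.piecewise a b i • s.piecewise N.row (1 : Matrix ι ι R).row i := by
    ext i j
    by_cases hi : i ∈ s <;> simp [hi]
  rw [hsmul, D.map_smul_univ, prod_piecewise, univ_inter, ← compl_eq_univ_sdiff, smul_eq_mul]
  exact congrArg _ (det_piecewise_one_eq_submatrix_det N s)

theorem det_mul_diagonal_add_diagonal (N : Matrix ι ι R) (a b : ι → R) :
    (N * diagonal a + diagonal b).det =
      ∑ s : Finset ι, (∏ i ∈ s, a i) * (∏ i ∈ sᶜ, b i) *
        (N.submatrix (↑) (↑) : Matrix s s R).det := by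
  rw [← det_transpose, transpose_add, transpose_mul, diagonal_transpose, diagonal_transpose,
    det_diagonal_mul_add_diagonal]
  simp only [← transpose_submatrix, det_transpose]

theorem det_mul_one_sub_diagonal_add_diagonal_ite_mem (N : Matrix ι ι R) (s : Finset ι) :
    (N * (1 - diagonal fun i => if i ∈ s then 0 else 1) +
        diagonal fun i => if i ∈ s then 0 else 1).det =
      (N.submatrix (↑) (↑) : Matrix s s R).det := by
  rw [← diagonal_one, diagonal_sub, det_mul_diagonal_add_diagonal, sum_eq_single s]
  · rw [prod_eq_one fun i hi => by simp [hi], prod_eq_one fun i hi => by simp [mem_compl.1 hi],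
      one_mul, one_mul]
  · intro t _ hts
    obtain ⟨i, hit, his⟩ | ⟨i, his, hit⟩ : (∃ i ∈ t, i ∉ s) ∨ ∃ i ∈ s, i ∉ t := by
      by_contra! h
      exact hts (Subset.antisymm (fun i hi => h.1 i hi) fun i hi => h.2 i hi)
    · rw [prod_eq_zero hit (by simp [his]), zero_mul, zero_mul]
    · rw [prod_eq_zero (mem_compl.2 hit) (by simp [his]), mul_zero, zero_mul]
  · simp

end CommRing

theorem det_mul_diagonal_add_diagonal_pos [CommRing R] [LinearOrder R] [IsStrictOrderedRing R]
    {N : Matrix ι ι R} (hN : ∀ s : Finset ι, 0 < (N.submatrix (↑) (↑) : Matrix s s R).det)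
    {a b : ι → R} (ha : 0 ≤ a) (hb : 0 ≤ b) (hab : ∀ i, 0 < a i ∨ 0 < b i) :
    0 < (N * diagonal a + diagonal b).det := by
  rw [det_mul_diagonal_add_diagonal]
  set S : Finset ι := univ.filter fun i => 0 < a i
  refine sum_pos' (fun s _ => ?_) ⟨S, mem_univ _, ?_⟩
  · have := hN s
    have : 0 ≤ ∏ i ∈ s, a i := prod_nonneg fun i _ => ha i
    have : 0 ≤ ∏ i ∈ sᶜ, b i := prod_nonneg fun i _ => hb i
    positivity
  · have hS_a : 0 < ∏ i ∈ S, a i := prod_pos fun i hi => (mem_filter.1 hi).2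
    have hS_b : 0 < ∏ i ∈ Sᶜ, b i :=
      prod_pos fun i hi => (hab i).resolve_left (by simpa [S] using hi)
    have := hN S
    positivity

theorem det_submatrix_pos_of_forall_isUnit {N : Matrix ι ι ℝ}
    (hN : ∀ d : ι → ℝ, (∀ i, d i ∈ Set.Icc (0 : ℝ) 1) →
      IsUnit (N * (1 - diagonal d) + diagonal d))
    (s : Finset ι) : 0 < (N.submatrix (↑) (↑) : Matrix s s ℝ).det := by
  let d : ℝ → ι → ℝ := fun t i => if i ∈ s then t else 1
  let f : ℝ → ℝ := fun t => (N * (1 - diagonal (d t)) + diagonal (d t)).det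
  have hd : ∀ t ∈ Set.Icc (0 : ℝ) 1, ∀ i, d t i ∈ Set.Icc (0 : ℝ) 1 := fun t ht i => by
    by_cases hi : i ∈ s <;> simp [d, hi, ht.1, ht.2]
  have hf_cont : Continuous f := by
    have : Continuous d := continuous_pi fun i => by
      by_cases hi : i ∈ s <;> simp only [d, hi, if_true, if_false] <;> fun_prop
    fun_prop
  have hf_zero : f 0 = (N.submatrix (↑) (↑) : Matrix s s ℝ).det :=
    det_mul_one_sub_diagonal_add_diagonal_ite_mem N s
  have hf_one : f 1 = 1 := by
    have : d 1 = 1 := funext fun i => by simp [d]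
    simp [f, this]
  by_contra! hle
  obtain ⟨t, ht, hft⟩ := intermediate_value_Icc zero_le_one hf_cont.continuousOn
    ⟨hf_zero ▸ hle, hf_one.symm ▸ zero_le_one⟩
  exact (isUnit_iff_isUnit_det _ |>.1 (hN (d t) (hd t ht))).ne_zero hft

end Matrix

theorem IsPMatrix.det_submatrix_pos {n : ℕ} {M : Matrix (Fin n) (Fin n) ℝ} (hM : IsPMatrix M)
    (s : Finset (Fin n)) : 0 < (M.submatrix (↑) (↑) : Matrix s s ℝ).det := by
  rcases s.eq_empty_or_nonempty with rfl | hs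
  · simp
  · exact hM s hs

theorem stmt1 {n : ℕ} (M : Matrix (Fin n) (Fin n) ℝ) :
    IsPMatrix M ↔
      ∀ d : Fin n → ℝ, (∀ i, d i ∈ Set.Icc (0 : ℝ) 1) →
        IsUnit (M * (1 - Matrix.diagonal d) + Matrix.diagonal d) := by
  refine ⟨fun hM d hd => ?_, fun h s _ => det_submatrix_pos_of_forall_isUnit h s⟩
  rw [isUnit_iff_isUnit_det, isUnit_iff_ne_zero, ← diagonal_one, diagonal_sub]
  refine (det_mul_diagonal_add_diagonal_pos hM.det_submatrix_pos
    (fun i => sub_nonneg.2 (hd i).2) (fun i => (hd i).1)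
    fun i => (lt_or_ge (d i) 1).imp sub_pos.2 zero_lt_one.trans_le).ne'
end

section
/- If B ∈ ℝ^{n×n} is nonsingular and σ_n(B^{-1}A) > 1 (the smallest singular value of B^{-1}A exceeds 1), then the GAVE Ax + B|x| = b has a unique solution for every b ∈ ℝ^n. -/
open Matrix

/- Writing `C = B⁻¹A`, the equation reads `Cx + |x| = B⁻¹b`. The spectral decomposition of `CᵀC`
gives `‖Cx‖ ≥ σₙ(C)‖x‖` in the Euclidean norm, so `C` is invertible with `‖C⁻¹‖ ≤ σₙ(C)⁻¹ < 1`.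
As `x ↦ |x|` is `1`-Lipschitz, `x ↦ C⁻¹(B⁻¹b - |x|)` is a contraction, and its unique fixed point
(Banach) is the unique solution. -/

open WithLp

theorem existsUnique_add_eq_of_antilipschitzWith {E : Type*} [NormedAddCommGroup E]
    [CompleteSpace E] {L g : E → E} {K K' : NNReal} (hL : AntilipschitzWith K L)
    (hL_surj : Function.Surjective L) (hg : LipschitzWith K' g) (hK : K * K' < 1) (d : E) :
    ∃! x, L x + g x = d := by
  let L' := Equiv.ofBijective L ⟨hL.injective, hL_surj⟩
  have hT : ContractingWith (K * K') (fun x => L'.symm (d - g x)) := by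
    refine ⟨hK, ?_⟩
    have h := (hL.to_rightInverse L'.right_inv).comp
      ((IsometryEquiv.subLeft d).isometry.lipschitz.comp hg)
    rw [one_mul] at h
    exact h
  have hfix : ∀ x, L x + g x = d ↔ Function.IsFixedPt (fun x => L'.symm (d - g x)) x :=
    fun x => (L'.symm_apply_eq.trans (eq_comm.trans eq_sub_iff_add_eq)).symm
  simp only [hfix]
  exact ⟨_, hT.fixedPoint_isFixedPt, fun _ hx => hT.fixedPoint_unique hx⟩

theorem lipschitzWith_toLp_abs_ofLp {ι : Type*} [Fintype ι] :
    LipschitzWith 1 (fun x : EuclideanSpace ℝ ι => toLp 2 |ofLp x|) := by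
  refine LipschitzWith.of_dist_le_mul fun x y => ?_
  rw [NNReal.coe_one, one_mul, EuclideanSpace.dist_eq, EuclideanSpace.dist_eq]
  gcongr with i
  exact abs_abs_sub_abs_le_abs_sub (x i) (y i)

theorem mulVec_add_mulVec_eq_iff {ι R : Type*} [Fintype ι] [DecidableEq ι] [CommRing R]
    {A B : Matrix ι ι R} (hB : IsUnit B) (x y b : ι → R) :
    A *ᵥ x + B *ᵥ y = b ↔ (B⁻¹ * A) *ᵥ x + y = B⁻¹ *ᵥ b := by
  have hB' := (isUnit_iff_isUnit_det B).mp hB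
  rw [show A *ᵥ x + B *ᵥ y = B *ᵥ ((B⁻¹ * A) *ᵥ x + y) by
    rw [mulVec_add, mulVec_mulVec, mul_nonsing_inv_cancel_left _ _ hB']]
  constructor
  · rintro rfl
    rw [mulVec_mulVec, nonsing_inv_mul _ hB', one_mulVec]
  · rintro h
    rw [h, mulVec_mulVec, mul_nonsing_inv _ hB', one_mulVec]

theorem norm_sq_eq_dotProduct {ι : Type*} [Fintype ι] (x : EuclideanSpace ℝ ι) :
    ‖x‖ ^ 2 = ofLp x ⬝ᵥ ofLp x := by
  rw [EuclideanSpace.real_norm_sq_eq]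
  simp [dotProduct, sq]

theorem minSV_nonneg {n : ℕ} (M : Matrix (Fin n) (Fin n) ℝ) : 0 ≤ minSV M :=
  Real.iInf_nonneg fun _ => Real.sqrt_nonneg _

theorem isHermitian_transpose_mul_self {n : ℕ} (M : Matrix (Fin n) (Fin n) ℝ) :
    (Mᵀ * M).IsHermitian := by
  simpa [conjTranspose_eq_transpose_of_trivial] using isHermitian_conjTranspose_mul_self M

theorem sq_minSV_le_eigenvalues {n : ℕ} (M : Matrix (Fin n) (Fin n) ℝ) (i : Fin n) :
    minSV M ^ 2 ≤ (isHermitian_transpose_mul_self M).eigenvalues i := by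
  have hle : minSV M ≤ singVals M i := ciInf_le (Set.finite_range _).bddBelow i
  calc minSV M ^ 2 ≤ singVals M i ^ 2 := pow_le_pow_left₀ (minSV_nonneg M) hle 2
    _ = _ := Real.sq_sqrt (eigenvalues_conjTranspose_mul_self_nonneg M i)

theorem posSemidef_transpose_mul_self_sub_sq_minSV {n : ℕ} (M : Matrix (Fin n) (Fin n) ℝ) :
    (Mᵀ * M - algebraMap ℝ _ (minSV M ^ 2)).PosSemidef := by
  have hH := isHermitian_transpose_mul_self M
  refine posSemidef_iff_isHermitian_and_spectrum_nonneg.mpr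
    ⟨hH.sub ((IsSelfAdjoint.all _).algebraMap _).isHermitian, ?_⟩
  rw [← spectrum.sub_singleton_eq, hH.spectrum_real_eq_range_eigenvalues]
  rintro _ ⟨_, ⟨i, rfl⟩, _, rfl, rfl⟩
  exact sub_nonneg.mpr (sq_minSV_le_eigenvalues M i)

theorem minSV_mul_norm_le_norm_toEuclideanLin {n : ℕ} (M : Matrix (Fin n) (Fin n) ℝ)
    (x : EuclideanSpace ℝ (Fin n)) : minSV M * ‖x‖ ≤ ‖toEuclideanLin M x‖ := by
  have h := (posSemidef_transpose_mul_self_sub_sq_minSV M).dotProduct_mulVec_nonneg (ofLp x)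
  rw [Algebra.algebraMap_eq_smul_one, sub_mulVec, smul_mulVec, one_mulVec, dotProduct_sub,
    dotProduct_smul, ← mulVec_mulVec, dotProduct_mulVec, vecMul_transpose, star_trivial,
    sub_nonneg, smul_eq_mul] at h
  refine (pow_le_pow_iff_left₀ (mul_nonneg (minSV_nonneg M) (norm_nonneg x)) (norm_nonneg _) two_ne_zero).mp ?_
  rw [mul_pow, norm_sq_eq_dotProduct, norm_sq_eq_dotProduct]
  exact h

theorem antilipschitzWith_toEuclideanLin {n : ℕ} (M : Matrix (Fin n) (Fin n) ℝ)
    (hM : 0 < minSV M) : AntilipschitzWith (minSV M)⁻¹.toNNReal (toEuclideanLin M) := by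
  refine AddMonoidHomClass.antilipschitz_of_bound _ fun x => ?_
  rw [Real.coe_toNNReal _ (inv_nonneg.mpr hM.le), le_inv_mul_iff₀ hM]
  exact minSV_mul_norm_le_norm_toEuclideanLin M x

theorem stmt14 {n : ℕ} (A B : Matrix (Fin n) (Fin n) ℝ) (hB : IsUnit B)
    (h : 1 < minSV (B⁻¹ * A)) :
    ∀ b : Fin n → ℝ, ∃! x : Fin n → ℝ, A *ᵥ x + B *ᵥ |x| = b := by
  intro b
  have hC := antilipschitzWith_toEuclideanLin (B⁻¹ * A) (one_pos.trans h)
  have hsolve := existsUnique_add_eq_of_antilipschitzWith hC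
    (LinearMap.injective_iff_surjective.mp hC.injective) lipschitzWith_toLp_abs_ofLp
    (by simpa using inv_lt_one_of_one_lt₀ h) (toLp 2 (B⁻¹ *ᵥ b))
  refine ((WithLp.equiv 2 (Fin n → ℝ)).symm.existsUnique_congr fun x => ?_).mpr hsolve
  rw [mulVec_add_mulVec_eq_iff hB, ← (toLp_injective 2).eq_iff]
  rfl
end
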